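/- Let {Σ_N} be an arbitrary sequence of strategy profiles on a sequence of instances of the binary voting model, with excess expected vote share f^N. Whenever f^N > 0, the fidelity satisfies A(Σ_N) ≥ 1 − 2·exp(−2·(f^N)²·N). Consequently, if liminf_{N→∞} √N·f^N = +∞, then lim_{N→∞} A(Σ_N) = 1. -/

import Mathlib

namespace Voting

/-- The two world states: `L` (low) and `H` (high). -/
inductive WState : Type
  | L
  | H
deriving DecidableEq

instance instFintypeWState : Fintype WState :=
  ⟨{WState.L, WState.H}, fun x => by cases x <;> simp⟩

/-- The two alternatives: `A` (accept) and `R` (reject). -/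
inductive Alt : Type
  | A
  | R
deriving DecidableEq

instance instFintypeAlt : Fintype Alt :=
  ⟨{Alt.A, Alt.R}, fun x => by cases x <;> simp⟩

/-- The shared parameters of a binary voting instance. -/
structure BParams where
  /-- majority threshold -/
  μ : ℝ
  hμ0 : 0 < μ
  hμ1 : μ < 1
  /-- prior of state `L` -/
  PL : ℝ
  /-- prior of state `H` -/
  PH : ℝ
  hPL : 0 < PL
  hPH : 0 < PH
  hPsum : PL + PH = 1
  /-- `Psig s ω` : probability of signal `s` in state `ω`; `true` is the signal `h`,
  `false` is the signal `l`. -/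
  Psig : Bool → WState → ℝ
  hPsig : ∀ s ω, 0 ≤ Psig s ω
  hPsigsum : ∀ ω, Psig false ω + Psig true ω = 1
  /-- positive correlation: `P_{hH} > P_{hL}` -/
  hcorr : Psig true WState.L < Psig true WState.H
  /-- upper bound of the utility functions -/
  B : ℕ
  hB : 0 < B

/-- A binary voting instance with `N` agents. -/
structure BInstance extends BParams where
  N : ℕ
  /-- the utility function of each agent -/
  u : Fin N → WState → Alt → ℕ
  hub : ∀ n ω a, u n ω a ≤ B
  huA : ∀ n, u n WState.L Alt.A < u n WState.H Alt.A
  huR : ∀ n, u n WState.H Alt.R < u n WState.L Alt.R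

/-- A (mixed) strategy profile: for each agent, the probability of voting for `A`
upon each signal. -/
abbrev Profile (I : BInstance) : Type := Fin I.N → Bool → ℝ

/-- All coordinates of the profile are genuine probabilities. -/
def ValidProfile (I : BInstance) (sp : Profile I) : Prop :=
  ∀ n s, 0 ≤ sp n s ∧ sp n s ≤ 1

/-- Probability that agent `n` votes for `A`, conditioned on the world state `ω`. -/
noncomputable def pA (I : BInstance) (sp : Profile I) (n : Fin I.N) (ω : WState) : ℝ :=
  I.Psig false ω * sp n false + I.Psig true ω * sp n true

open Finset in
/-- `lambdaA I sp ω` : the probability that at least `μ·N` agents vote for `A`,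
conditioned on the world state `ω` (conditionally on the state, the votes are independent,
agent `n` voting for `A` with probability `pA I sp n ω`). -/
noncomputable def lambdaA (I : BInstance) (sp : Profile I) (ω : WState) : ℝ :=
  ∑ v : Fin I.N → Bool,
    if I.μ * (I.N : ℝ) ≤ ((univ.filter fun n => v n = true).card : ℝ) then
      ∏ n, (if v n = true then pA I sp n ω else 1 - pA I sp n ω)
    else 0

/-- The fidelity of a strategy profile: the probability that the informed majority
decision is reached. -/
noncomputable def fid (I : BInstance) (sp : Profile I) : ℝ :=
  I.PL * (1 - lambdaA I sp WState.L) + I.PH * lambdaA I sp WState.H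

/-- The ex-ante expected utility of agent `n` under profile `sp`. -/
noncomputable def ut (I : BInstance) (sp : Profile I) (n : Fin I.N) : ℝ :=
  I.PL * (lambdaA I sp WState.L * (I.u n WState.L Alt.A : ℝ)
      + (1 - lambdaA I sp WState.L) * (I.u n WState.L Alt.R : ℝ))
    + I.PH * (lambdaA I sp WState.H * (I.u n WState.H Alt.A : ℝ)
      + (1 - lambdaA I sp WState.H) * (I.u n WState.H Alt.R : ℝ))

/-- A friendly agent prefers `A` in both states. -/
def Friendly (I : BInstance) (n : Fin I.N) : Prop :=
  ∀ ω, I.u n ω Alt.R < I.u n ω Alt.A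

/-- An unfriendly agent prefers `R` in both states. -/
def Unfriendly (I : BInstance) (n : Fin I.N) : Prop :=
  ∀ ω, I.u n ω Alt.A < I.u n ω Alt.R

/-- A contingent agent prefers `A` in state `H` and `R` in state `L`. -/
def Contingent (I : BInstance) (n : Fin I.N) : Prop :=
  I.u n WState.H Alt.R < I.u n WState.H Alt.A ∧ I.u n WState.L Alt.A < I.u n WState.L Alt.R

/-- A profile is regular if every friendly agent always votes for `A` and every
unfriendly agent always votes for `R`. -/
def Regular (I : BInstance) (sp : Profile I) : Prop :=
  (∀ n, Friendly I n → ∀ s, sp n s = 1) ∧ (∀ n, Unfriendly I n → ∀ s, sp n s = 0)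

/-- `ε`-strong Bayes Nash Equilibrium: no coalition `D` can deviate so that no member
is worse off and some member gains more than `ε`. -/
def IsEpsBNE (I : BInstance) (sp : Profile I) (ε : ℝ) : Prop :=
  ¬ ∃ (D : Set (Fin I.N)) (sp' : Profile I),
      ValidProfile I sp' ∧
      (∀ n, n ∉ D → sp' n = sp n) ∧
      (∀ n ∈ D, ut I sp n ≤ ut I sp' n) ∧
      (∃ n ∈ D, ut I sp n + ε < ut I sp' n)

/-- Number of friendly agents. -/
noncomputable def friendlyCount (I : BInstance) : ℕ := {n | Friendly I n}.ncard

/-- Number of unfriendly agents. -/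
noncomputable def unfriendlyCount (I : BInstance) : ℕ := {n | Unfriendly I n}.ncard

/-- Number of contingent agents. -/
noncomputable def contingentCount (I : BInstance) : ℕ := {n | Contingent I n}.ncard

/-- A sequence of binary voting instances sharing the same parameters, in which the
instance indexed by `N` has `N` agents. -/
structure BSeq where
  params : BParams
  inst : ℕ → BInstance
  hN : ∀ N, (inst N).N = N
  hshare : ∀ N, (inst N).toBParams = params

/-- A sequence of binary voting instances with fixed approximate fractions
`(αF, αU, αC)` of friendly, unfriendly and contingent agents. -/
structure BSeqFrac extends BSeq where
  αF : ℝ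
  αU : ℝ
  αC : ℝ
  hαF0 : 0 ≤ αF
  hαU0 : 0 ≤ αU
  hαC0 : 0 ≤ αC
  hαsum : αF + αU + αC = 1
  hαFμ : αF < params.μ
  hαUμ : αU < 1 - params.μ
  hNF : ∀ N : ℕ, friendlyCount (inst N) = ⌊αF * (N : ℝ)⌋₊
  hNU : ∀ N : ℕ, unfriendlyCount (inst N) = ⌊αU * (N : ℝ)⌋₊
  hNC : ∀ N : ℕ, contingentCount (inst N) = N - ⌊αF * (N : ℝ)⌋₊ - ⌊αU * (N : ℝ)⌋₊

/-- Excess expected vote share of `A` in state `H`. -/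
noncomputable def fH (I : BInstance) (sp : Profile I) : ℝ :=
  (∑ n, pA I sp n WState.H) / (I.N : ℝ) - I.μ

/-- Excess expected vote share of `R` in state `L`. -/
noncomputable def fL (I : BInstance) (sp : Profile I) : ℝ :=
  (∑ n, (1 - pA I sp n WState.L)) / (I.N : ℝ) - (1 - I.μ)

/-- The excess expected vote share `f = min (f_H, f_L)`. -/
noncomputable def fmin (I : BInstance) (sp : Profile I) : ℝ := min (fH I sp) (fL I sp)

end Voting

/-! Conditioned on the state `ω`, the votes are independent Bernoulli variables, so
`lambdaA I sp ω` is the probability of an event under a product of Bernoulli measures. In state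
`H` the expected number of votes for `A` exceeds the threshold `μN` by `N f_H`, in state `L` it
falls short of it by `N f_L`; Hoeffding's inequality then bounds the probability of the wrong
decision by `exp(-2 f² N)` in either state. -/

open MeasureTheory ProbabilityTheory Filter Topology Finset Real

section BernoulliPi

variable {ι : Type*} [Fintype ι] (q : ι → unitInterval)

noncomputable def bernoulliPi : Measure (ι → Bool) :=
  Measure.pi fun i => Ber(true, false, q i)

instance : IsProbabilityMeasure (bernoulliPi q) := by
  unfold bernoulliPi; infer_instance

lemma bernoulliPi_real_singleton (v : ι → Bool) :
    (bernoulliPi q).real {v} = ∏ i, if v i then (q i : ℝ) else 1 - q i := by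
  rw [← Set.univ_pi_singleton, bernoulliPi, measureReal_def, Measure.pi_pi,
    ENNReal.toReal_prod]
  refine prod_congr rfl fun i _ => ?_
  cases v i <;> simp

lemma bernoulliPi_real_eq_sum [DecidableEq ι] (p : (ι → Bool) → Prop) [DecidablePred p] :
    (bernoulliPi q).real {v | p v} =
      ∑ v, if p v then ∏ i, (if v i then (q i : ℝ) else 1 - q i) else 0 := by
  rw [← sum_filter, ← coe_filter_univ, ← sum_measureReal_singleton]
  simp only [bernoulliPi_real_singleton]

lemma bernoulliPi_real_sum_add_le (f : Bool → ℝ) (hf : ∀ b, f b ∈ Set.Icc 0 1) {t : ℝ}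
    (ht : 0 ≤ t) :
    (bernoulliPi q).real
        {v | ∑ i, (q i * f true + (1 - q i) * f false) + Fintype.card ι * t ≤ ∑ i, f (v i)}
      ≤ exp (-2 * t ^ 2 * Fintype.card ι) := by
  set X : ι → (ι → Bool) → ℝ := fun i v => f (v i) - (q i * f true + (1 - q i) * f false)
  have hindep : iIndepFun X (bernoulliPi q) :=
    iIndepFun_pi (X := fun i b => f b - (q i * f true + (1 - q i) * f false))
      fun i => by fun_prop
  have hsubG : ∀ i ∈ univ, HasSubgaussianMGF (X i) ((‖(1 : ℝ) - 0‖₊ / 2) ^ 2)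
      (bernoulliPi q) := by
    intro i _
    have hlemma := hasSubgaussianMGF_of_mem_Icc (μ := Ber(true, false, q i)) (X := f)
      (by fun_prop) (ae_of_all _ hf)
    rw [integral_bernoulliMeasure, smul_eq_mul, smul_eq_mul,
      ← (measurePreserving_eval (fun i => Ber(true, false, q i)) i).map_eq] at hlemma
    exact HasSubgaussianMGF.of_map (μ := bernoulliPi q) (Y := Function.eval i)
      (measurable_pi_apply i).aemeasurable hlemma
  have hoeffding := HasSubgaussianMGF.measure_sum_ge_le_of_iIndepFun hindep hsubG
    (ε := Fintype.card ι * t) (by positivity)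
  convert hoeffding using 2
  · ext v
    simp only [X, sum_sub_distrib, Set.mem_ofPred_eq]
    constructor <;> intro <;> linarith
  · rcases eq_or_ne (Fintype.card ι : ℝ) 0 with hcard | hcard
    · simp [hcard]
    · field_simp
      simp only [sub_zero, nnnorm_one, one_pow, one_div, sum_const, card_univ, nsmul_eq_mul,
        NNReal.coe_mul, NNReal.coe_natCast, NNReal.coe_inv, NNReal.coe_pow, NNReal.coe_ofNat,
        neg_inj]
      ring

lemma bernoulliPi_real_sum_add_le_card {t : ℝ} (ht : 0 ≤ t) :
    (bernoulliPi q).real {v | ∑ i, (q i : ℝ) + Fintype.card ι * t ≤ #{i | v i = true}}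
      ≤ exp (-2 * t ^ 2 * Fintype.card ι) := by
  convert bernoulliPi_real_sum_add_le q (fun b => if b then 1 else 0)
    (fun b => by cases b <;> simp) ht using 4 with v
  rw [natCast_card_filter]
  simp

lemma bernoulliPi_real_card_le_sum_sub {t : ℝ} (ht : 0 ≤ t) :
    (bernoulliPi q).real {v | (#{i | v i = true} : ℝ) ≤ ∑ i, (q i : ℝ) - Fintype.card ι * t}
      ≤ exp (-2 * t ^ 2 * Fintype.card ι) := by
  convert bernoulliPi_real_sum_add_le q (fun b => if b then 0 else 1)
    (fun b => by cases b <;> simp) ht using 4 with v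
  have hcount : ∑ i, (if v i = true then (0 : ℝ) else 1) = Fintype.card ι - #{i | v i = true} :=
    calc ∑ i, (if v i = true then (0 : ℝ) else 1)
        = ∑ i, (1 - if v i = true then (1 : ℝ) else 0) :=
          sum_congr rfl fun i _ => by cases v i <;> simp
      _ = _ := by rw [sum_sub_distrib, natCast_card_filter]; simp
  simp only [hcount, Bool.false_eq_true, if_true, if_false, mul_zero, mul_one, zero_add,
    sum_sub_distrib, sum_const, card_univ, nsmul_eq_mul]
  constructor <;> intro <;> linarith

end BernoulliPi

lemma tendsto_nhds_one_of_one_sub_two_mul_exp_le {a f : ℕ → ℝ}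
    (hlow : ∀ N : ℕ, 0 < f N → 1 - 2 * exp (-2 * f N ^ 2 * N) ≤ a N) (hup : ∀ N, a N ≤ 1)
    (hf : Tendsto (fun N : ℕ => √N * f N) atTop atTop) : Tendsto a atTop (𝓝 1) := by
  have hsq : ∀ N : ℕ, -2 * (√N * f N) ^ 2 = -2 * f N ^ 2 * N := fun N => by
    rw [mul_pow, sq_sqrt N.cast_nonneg]
    ring
  have hlim : Tendsto (fun N : ℕ => 1 - 2 * exp (-2 * (√N * f N) ^ 2)) atTop (𝓝 1) := by
    have hexp := tendsto_exp_atBot.comp <|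
      ((tendsto_pow_atTop two_ne_zero).comp hf).const_mul_atTop_of_neg (by norm_num : (-2 : ℝ) < 0)
    simpa using (hexp.const_mul 2).const_sub 1
  refine tendsto_of_tendsto_of_tendsto_of_le_of_le' hlim tendsto_const_nhds ?_
    (Eventually.of_forall hup)
  filter_upwards [hf.eventually_gt_atTop 0] with N hN
  rw [hsq]
  exact hlow N (pos_of_mul_pos_right hN (sqrt_nonneg _))

namespace Voting

variable {I : BInstance} {sp : Profile I}

lemma pA_mem_unitInterval (hv : ValidProfile I sp) (n : Fin I.N) (ω : WState) :
    pA I sp n ω ∈ unitInterval := by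
  have hsig := I.hPsigsum ω
  have h0 := I.hPsig false ω
  have h1 := I.hPsig true ω
  obtain ⟨hf0, hf1⟩ := hv n false
  obtain ⟨ht0, ht1⟩ := hv n true
  unfold pA
  constructor <;> nlinarith

noncomputable def voteProb (hv : ValidProfile I sp) (ω : WState) : Fin I.N → unitInterval :=
  fun n => ⟨pA I sp n ω, pA_mem_unitInterval hv n ω⟩

@[simp]
lemma coe_voteProb (hv : ValidProfile I sp) (ω : WState) (n : Fin I.N) :
    (voteProb hv ω n : ℝ) = pA I sp n ω := rfl

lemma lambdaA_eq_bernoulliPi (hv : ValidProfile I sp) (ω : WState) :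
    lambdaA I sp ω =
      (bernoulliPi (voteProb hv ω)).real {v | I.μ * I.N ≤ (#{n | v n = true} : ℝ)} := by
  rw [bernoulliPi_real_eq_sum]
  rfl

lemma N_mul_fH : (I.N : ℝ) * fH I sp = ∑ n, pA I sp n WState.H - I.μ * I.N := by
  rw [fH, mul_sub, mul_div_cancel_of_imp' fun h => ?_, mul_comm]
  exact sum_eq_zero fun n _ => absurd n.isLt (by simp_all)

lemma N_mul_fL : (I.N : ℝ) * fL I sp = I.μ * I.N - ∑ n, pA I sp n WState.L := by
  rw [fL, mul_sub, mul_div_cancel_of_imp' fun h => ?_, sum_sub_distrib]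
  · simp only [sum_const, card_univ, Fintype.card_fin, nsmul_eq_mul, mul_one]
    ring
  · exact sum_eq_zero fun n _ => absurd n.isLt (by simp_all)

lemma one_sub_lambdaA_H_le_exp (hv : ValidProfile I sp) (hf : 0 ≤ fH I sp) :
    1 - lambdaA I sp WState.H ≤ exp (-2 * fH I sp ^ 2 * I.N) := by
  rw [lambdaA_eq_bernoulliPi hv, ← probReal_compl_eq_one_sub (by measurability)]
  calc _ ≤ (bernoulliPi (voteProb hv WState.H)).real
          {v | (#{n | v n = true} : ℝ) ≤ ∑ n, (voteProb hv WState.H n : ℝ) - I.N * fH I sp} := by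
        refine measureReal_mono fun v hvote => ?_
        simp only [Set.mem_compl_iff, Set.mem_ofPred_eq, not_le, coe_voteProb] at hvote ⊢
        linarith [N_mul_fH (sp := sp)]
    _ ≤ _ := by simpa using bernoulliPi_real_card_le_sum_sub (voteProb hv WState.H) hf

lemma lambdaA_L_le_exp (hv : ValidProfile I sp) (hf : 0 ≤ fL I sp) :
    lambdaA I sp WState.L ≤ exp (-2 * fL I sp ^ 2 * I.N) := by
  rw [lambdaA_eq_bernoulliPi hv]
  calc _ ≤ (bernoulliPi (voteProb hv WState.L)).real
          {v | ∑ n, (voteProb hv WState.L n : ℝ) + I.N * fL I sp ≤ (#{n | v n = true} : ℝ)} := by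
        refine measureReal_mono fun v hvote => ?_
        simp only [Set.mem_ofPred_eq, coe_voteProb] at hvote ⊢
        linarith [N_mul_fL (sp := sp)]
    _ ≤ _ := by simpa using bernoulliPi_real_sum_add_le_card (voteProb hv WState.L) hf

lemma lambdaA_nonneg (hv : ValidProfile I sp) (ω : WState) : 0 ≤ lambdaA I sp ω := by
  rw [lambdaA_eq_bernoulliPi hv]
  exact measureReal_nonneg

lemma lambdaA_le_one (hv : ValidProfile I sp) (ω : WState) : lambdaA I sp ω ≤ 1 := by
  rw [lambdaA_eq_bernoulliPi hv]
  exact measureReal_le_one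

lemma fid_le_one (hv : ValidProfile I sp) : fid I sp ≤ 1 := by
  have hL := lambdaA_nonneg hv WState.L
  have hH := lambdaA_le_one hv WState.H
  rw [fid]
  nlinarith [I.hPL, I.hPH, I.hPsum]

lemma one_sub_exp_le_fid (hv : ValidProfile I sp) (hf : 0 ≤ fmin I sp) :
    1 - exp (-2 * fmin I sp ^ 2 * I.N) ≤ fid I sp := by
  set E := exp (-2 * fmin I sp ^ 2 * I.N)
  have exp_le_E : ∀ g, fmin I sp ≤ g → exp (-2 * g ^ 2 * I.N) ≤ E := fun g hg => by
    refine exp_le_exp.mpr (mul_le_mul_of_nonneg_right ?_ (Nat.cast_nonneg _))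
    nlinarith
  have hH : 1 - E ≤ lambdaA I sp WState.H := by
    linarith [one_sub_lambdaA_H_le_exp hv (hf.trans (min_le_left _ _)),
      exp_le_E _ (min_le_left _ _)]
  have hL : lambdaA I sp WState.L ≤ E :=
    (lambdaA_L_le_exp hv (hf.trans (min_le_right _ _))).trans (exp_le_E _ (min_le_right _ _))
  calc 1 - E = I.PL * (1 - E) + I.PH * (1 - E) := by rw [← add_mul, I.hPsum, one_mul]
    _ ≤ fid I sp := by
      rw [fid]
      gcongr
      exacts [I.hPL.le, I.hPH.le]

/-- Theorem 4, first case. For any sequence of strategy profiles,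
whenever the excess expected vote share `f^N` is positive the fidelity is at least
`1 - 2·exp(-2·(f^N)²·N)`; consequently, if `liminf √N·f^N = +∞` (i.e. `√N·f^N → ∞`),
the fidelities converge to `1`. -/
theorem fidelity_lower_bound_of_excess_share (S : BSeq)
    (sp : ∀ N : ℕ, Profile (S.inst N))
    (hval : ∀ N, ValidProfile (S.inst N) (sp N)) :
    (∀ N : ℕ, 0 < fmin (S.inst N) (sp N) →
      1 - 2 * Real.exp (-2 * (fmin (S.inst N) (sp N)) ^ 2 * (N : ℝ)) ≤
        fid (S.inst N) (sp N)) ∧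
    (Filter.Tendsto (fun N : ℕ => Real.sqrt (N : ℝ) * fmin (S.inst N) (sp N))
        Filter.atTop Filter.atTop →
      Filter.Tendsto (fun N => fid (S.inst N) (sp N)) Filter.atTop (nhds 1)) := by
  have hbound : ∀ N : ℕ, 0 < fmin (S.inst N) (sp N) →
      1 - 2 * exp (-2 * fmin (S.inst N) (sp N) ^ 2 * N) ≤ fid (S.inst N) (sp N) := by
    intro N hf
    have hfid := one_sub_exp_le_fid (hval N) hf.le
    rw [S.hN N] at hfid
    linarith [exp_pos (-2 * fmin (S.inst N) (sp N) ^ 2 * N)]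
  exact ⟨hbound, tendsto_nhds_one_of_one_sub_two_mul_exp_le hbound fun N => fid_le_one (hval N)⟩

end Voting
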